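/- arXiv:math/0508190 — 7 statements merged into one kernel-verified Lean document; each statement's English description precedes it below -/
import Mathlib

section
/- For any real sequence x_1, ..., x_n with n ≥ 2, letting x̄_i = (x_1 + ... + x_i)/i and x̄_0 = 0, one has ∑_{i=1}^n x̄_{i-1} x_i = (1/2)∑_{i=2}^n (i/(i-1)) x̄_i² + (n/2) x̄_n² − (1/2)(x_1² + ∑_{i=2}^n x_i²/(i-1)). -/
open Finset

/-- The increment of the right-hand side from `n = m` to `n = m + 1`, with `a = x̄ₘ`, `b = x̄ₘ₊₁`,
`y = xₘ₊₁`; it reduces to `((m + 1) b)² = (m a + y)²`. -/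
theorem mul_eq_of_add_one_mul_eq {m a b y : ℝ} (hm : m ≠ 0) (hb : (m + 1) * b = m * a + y) :
    a * y = (1 / 2) * ((m + 1) / m) * b ^ 2 + ((m + 1) / 2) * b ^ 2 - (m / 2) * a ^ 2
      - (1 / 2) * (y ^ 2 / m) := by
  field_simp
  linear_combination (-((m + 1) * b + m * a + y)) * hb

theorem add_one_mul_mean_succ (x xbar : ℕ → ℝ)
    (hxbar : ∀ i, xbar i = (∑ j ∈ Icc 1 i, x j) / i) (m : ℕ) :
    ((m : ℝ) + 1) * xbar (m + 1) = m * xbar m + x (m + 1) := by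
  rw [hxbar (m + 1), hxbar m, sum_Icc_succ_top (by omega)]
  obtain rfl | hm := eq_or_ne m 0
  · simp
  · push_cast
    field_simp

theorem summation_by_parts_identity (n : ℕ) (hn : 2 ≤ n) (x : ℕ → ℝ)
    (xbar : ℕ → ℝ) (hxbar : ∀ i, xbar i = (∑ j ∈ Finset.Icc 1 i, x j) / i) :
    ∑ i ∈ Finset.Icc 1 n, xbar (i - 1) * x i =
      (1 / 2) * ∑ i ∈ Finset.Icc 2 n, ((i : ℝ) / ((i : ℝ) - 1)) * (xbar i) ^ 2
      + ((n : ℝ) / 2) * (xbar n) ^ 2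
      - (1 / 2) * ((x 1) ^ 2 + ∑ i ∈ Finset.Icc 2 n, (x i) ^ 2 / ((i : ℝ) - 1)) := by
  replace hn : 1 ≤ n := by omega
  induction n, hn using Nat.le_induction with
  | base => simp [hxbar]
  | succ n hn ih =>
    have hstep := mul_eq_of_add_one_mul_eq (by positivity) (add_one_mul_mean_succ x xbar hxbar n)
    rw [sum_Icc_succ_top (by omega), sum_Icc_succ_top (by omega),
      sum_Icc_succ_top (by omega), ih, Nat.add_sub_cancel, hstep]
    push_cast
    ring
end

section
/- For any real sequence x_1, ..., x_n with n ≥ 2 and |x_i| ≤ 1 for all i, letting x̄_i be the average of the first i terms (x̄_0 = 0), one has ∑_{i=1}^n x̄_{i-1} x_i ≥ (1/2)∑_{i=1}^n x̄_i² + (n/2) x̄_n² − (1/2)(3 + log(n−1)). -/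
/-!
Let `G n = ∑_{i ≤ n} x̄_{i-1} x_i - ½ ∑_{i ≤ n} x̄_i² - (n/2) x̄_n²`. Substituting
`x_{n+1} = (n+1) x̄_{n+1} - n x̄_n` shows that `G (n+1) - G n + 1/(2n)` equals
`(x̄_{n+1}² + 1 - x_{n+1}²) / (2n) ≥ 0`. Since `G 1 = -x_1² ≥ -1`, this gives
`G n ≥ -1 - H_{n-1} / 2`, and `H_{n-1} ≤ 1 + log (n-1)` finishes the proof.
-/

open Finset Real

theorem le_mul_of_succ_mul_eq_add {n a b t : ℝ} (hn : 0 < n) (ht : |t| ≤ 1)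
    (hb : (n + 1) * b = n * a + t) :
    (n + 2) / 2 * b ^ 2 - n / 2 * a ^ 2 - 1 / (2 * n) ≤ a * t := by
  have hgap : a * t - ((n + 2) / 2 * b ^ 2 - n / 2 * a ^ 2 - 1 / (2 * n))
      = (b ^ 2 + (1 - t ^ 2)) / (2 * n) := by
    obtain rfl : t = (n + 1) * b - n * a := by linarith
    field_simp
    ring
  have ht2 : t ^ 2 ≤ 1 := (sq_le_one_iff_abs_le_one t).mpr ht
  have : 0 ≤ (b ^ 2 + (1 - t ^ 2)) / (2 * n) :=
    div_nonneg (add_nonneg (sq_nonneg b) (sub_nonneg.mpr ht2)) (by positivity)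
  linarith

section Averages

variable {x xbar : ℕ → ℝ}

theorem succ_mul_average_succ (hxbar : ∀ i, xbar i = (∑ j ∈ Icc 1 i, x j) / i) (n : ℕ) :
    ((n : ℝ) + 1) * xbar (n + 1) = n * xbar n + x (n + 1) := by
  rcases Nat.eq_zero_or_pos n with rfl | hn
  · simp [hxbar]
  rw [hxbar, hxbar, sum_Icc_succ_top (Nat.le_add_left 1 n)]
  push_cast
  field_simp

noncomputable def averageGap (x xbar : ℕ → ℝ) (n : ℕ) : ℝ :=
  ∑ i ∈ Icc 1 n, xbar (i - 1) * x i - 1 / 2 * ∑ i ∈ Icc 1 n, xbar i ^ 2 - n / 2 * xbar n ^ 2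

theorem averageGap_succ (n : ℕ) :
    averageGap x xbar (n + 1) = averageGap x xbar n
      + (xbar n * x (n + 1) - (n + 2) / 2 * xbar (n + 1) ^ 2 + n / 2 * xbar n ^ 2) := by
  simp only [averageGap, sum_Icc_succ_top (Nat.le_add_left 1 n), Nat.add_sub_cancel]
  push_cast
  ring

theorem averageGap_succ_ge (hxbar : ∀ i, xbar i = (∑ j ∈ Icc 1 i, x j) / i) (n : ℕ)
    (hx : ∀ i, 1 ≤ i → i ≤ n + 1 → |x i| ≤ 1) :
    -(1 + harmonic n / 2) ≤ averageGap x xbar (n + 1) := by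
  induction n with
  | zero =>
    have hx1 : x 1 ^ 2 ≤ 1 := (sq_le_one_iff_abs_le_one _).mpr (hx 1 le_rfl le_rfl)
    have hgap_one : averageGap x xbar 1 = -x 1 ^ 2 := by
      norm_num [averageGap, hxbar]
      ring
    rw [hgap_one, harmonic_zero, Rat.cast_zero]
    linarith
  | succ n ih =>
    have hstep := le_mul_of_succ_mul_eq_add (by positivity) (hx (n + 2) (by omega) le_rfl)
      (succ_mul_average_succ hxbar (n + 1))
    have hgap := ih fun i hi hin => hx i hi (by omega)
    rw [averageGap_succ, harmonic_succ]
    push_cast at hstep ⊢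
    have hinv : 1 / (2 * ((n : ℝ) + 1)) = ((n : ℝ) + 1)⁻¹ / 2 := by field_simp
    linarith

end Averages

theorem summation_by_parts_lower_bound (n : ℕ) (hn : 2 ≤ n) (x : ℕ → ℝ)
    (hx : ∀ i, 1 ≤ i → i ≤ n → |x i| ≤ 1)
    (xbar : ℕ → ℝ) (hxbar : ∀ i, xbar i = (∑ j ∈ Finset.Icc 1 i, x j) / i) :
    ∑ i ∈ Finset.Icc 1 n, xbar (i - 1) * x i ≥
      (1 / 2) * ∑ i ∈ Finset.Icc 1 n, (xbar i) ^ 2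
      + ((n : ℝ) / 2) * (xbar n) ^ 2
      - (1 / 2) * (3 + Real.log ((n : ℝ) - 1)) := by
  obtain ⟨m, rfl⟩ : ∃ m, n = m + 1 := ⟨n - 1, by omega⟩
  have hgap := averageGap_succ_ge hxbar m hx
  have hharmonic := harmonic_le_one_add_log m
  push_cast [add_sub_cancel_right]
  unfold averageGap at hgap
  push_cast at hgap
  linarith
end

section
/- Let 0 < c ≤ 1/2 and let x_1, x_2, ... be a sequence of reals with |x_i| ≤ 1 for all i. Define x̄_0 = 0, x̄_i = (x_1+...+x_i)/i, and the capital process K_n = ∏_{i=1}^n (1 + c·x̄_{i−1}·x_i). Then K_n > 0 for all n and for all n ≥ 2, log K_n ≥ (c/2)·log n·(n·x̄_n²/log n − 1) − (3/2)c. -/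
/-!
Write `x̄ₙ` for the running mean and `Hₙ` for the harmonic numbers. The quantity
`Φₙ₊₁ = (c/2)(n+1) x̄ₙ₊₁² + c² x̄ₙ₊₁² - (c/2) Hₙ - c` is a lower bound for `log Kₙ₊₁`:
each bet `t = c x̄ₙ xₙ₊₁` has `|t| ≤ 1/2`, so `log (1 + t) ≥ t - t²`, and this one-step gain
dominates the increment of `Φ` by an explicit sum of squares. The theorem follows from
`Hₙ ≤ 1 + log n`.
-/

open Finset Real

lemma sub_sq_le_log_one_add {t : ℝ} (ht : -(1 / 2) ≤ t) : t - t ^ 2 ≤ log (1 + t) := by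
  have h1t : 0 < 1 + t := by linarith
  rcases le_or_gt 0 t with ht0 | ht0
  · calc t - t ^ 2 ≤ 1 - (1 + t)⁻¹ := by
          rw [← sub_nonneg, show 1 - (1 + t)⁻¹ - (t - t ^ 2) = t ^ 3 / (1 + t) by
            field_simp; ring]
          positivity
      _ ≤ log (1 + t) := one_sub_inv_le_log_of_pos h1t
  · have hv : 0 ≤ t ^ 2 - t := by nlinarith
    have hexp : 1 ≤ (1 + t) * exp (t ^ 2 - t) := by
      have hq := quadratic_le_exp_of_nonneg hv
      nlinarith [mul_le_mul_of_nonneg_left hq h1t.le, sq_nonneg (t + 1 / 2), sq_nonneg t,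
        mul_nonneg (sq_nonneg t) (sq_nonneg (t + 1 / 2))]
    rw [le_log_iff_exp_le h1t, show t - t ^ 2 = -(t ^ 2 - t) by ring, exp_neg]
    rwa [inv_le_comm₀ (exp_pos _) h1t, inv_le_iff_one_le_mul₀' h1t]

lemma potential_step_le {c m a y : ℝ} (hc0 : 0 ≤ c) (hc1 : c ≤ 1 / 2) (hm : 0 < m)
    (hy : |y| ≤ 1) :
    c / 2 * (m + 1) * ((m * a + y) / (m + 1)) ^ 2 + c ^ 2 * ((m * a + y) / (m + 1)) ^ 2
        - c / 2 / m
      ≤ c / 2 * m * a ^ 2 + c ^ 2 * a ^ 2 + (c * a * y - (c * a * y) ^ 2) := by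
  have hy2 : 0 ≤ 1 - y ^ 2 := sub_nonneg.2 ((sq_le_one_iff_abs_le_one _).2 hy)
  have hcm : 0 ≤ m + 1 - 2 * c * m := by nlinarith
  rw [← sub_nonneg]
  have key : c / 2 * m * a ^ 2 + c ^ 2 * a ^ 2 + (c * a * y - (c * a * y) ^ 2)
      - (c / 2 * (m + 1) * ((m * a + y) / (m + 1)) ^ 2 + c ^ 2 * ((m * a + y) / (m + 1)) ^ 2
        - c / 2 / m)
      = c * (1 - y ^ 2) / (2 * m) + c ^ 2 * a ^ 2 * (1 - y ^ 2)
        + c * (m + 1 - 2 * c * m) * ((m * a + y) / (m + 1)) ^ 2 / (2 * m) := by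
    field_simp
    ring
  rw [key]
  positivity

namespace CapitalProcess

variable (c : ℝ) (x : ℕ → ℝ)

noncomputable section

/-- `mean x 0 = 0` because `0 / 0 = 0`, which is the convention `x̄₀ = 0`. -/
def mean (n : ℕ) : ℝ := (∑ j ∈ Icc 1 n, x j) / n

def capital (n : ℕ) : ℝ := ∏ i ∈ Icc 1 n, (1 + c * mean x (i - 1) * x i)

end

variable {c x}

lemma mean_succ (n : ℕ) : mean x (n + 1) = (n * mean x n + x (n + 1)) / (n + 1) := by
  rcases n.eq_zero_or_pos with rfl | hn
  · simp [mean]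
  · simp only [mean, sum_Icc_succ_top (Nat.le_add_left 1 n)]
    field_simp
    push_cast
    ring

lemma abs_mean_le_one (hx : ∀ i, |x i| ≤ 1) (n : ℕ) : |mean x n| ≤ 1 := by
  rw [mean, abs_div, Nat.abs_cast]
  refine div_le_one_of_le₀ ?_ n.cast_nonneg
  calc |∑ j ∈ Icc 1 n, x j| ≤ ∑ j ∈ Icc 1 n, |x j| := abs_sum_le_sum_abs _ _
    _ ≤ ∑ j ∈ Icc 1 n, 1 := sum_le_sum fun j _ => hx j
    _ = n := by simp

lemma abs_mul_mean_mul_le_half (hc0 : 0 ≤ c) (hc1 : c ≤ 1 / 2) (hx : ∀ i, |x i| ≤ 1)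
    (j i : ℕ) : |c * mean x j * x i| ≤ 1 / 2 := by
  rw [abs_mul, abs_mul, abs_of_nonneg hc0, mul_assoc]
  calc c * (|mean x j| * |x i|) ≤ c * 1 :=
        mul_le_mul_of_nonneg_left (mul_le_one₀ (abs_mean_le_one hx j) (abs_nonneg _) (hx i)) hc0
    _ ≤ 1 / 2 := by linarith

lemma capital_pos (hc0 : 0 ≤ c) (hc1 : c ≤ 1 / 2) (hx : ∀ i, |x i| ≤ 1) (n : ℕ) :
    0 < capital c x n :=
  prod_pos fun i _ => by linarith [(abs_le.mp (abs_mul_mean_mul_le_half hc0 hc1 hx (i - 1) i)).1]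

lemma capital_succ (n : ℕ) :
    capital c x (n + 1) = capital c x n * (1 + c * mean x n * x (n + 1)) := by
  rw [capital, capital, prod_Icc_succ_top (Nat.le_add_left 1 n), Nat.add_sub_cancel]

lemma log_capital_succ_ge (hc0 : 0 ≤ c) (hc1 : c ≤ 1 / 2) (hx : ∀ i, |x i| ≤ 1) (n : ℕ) :
    c / 2 * (n + 1) * mean x (n + 1) ^ 2 + c ^ 2 * mean x (n + 1) ^ 2 - c / 2 * harmonic n - c
      ≤ log (capital c x (n + 1)) := by
  induction n with
  | zero =>
    have hx1 : x 1 ^ 2 ≤ 1 := (sq_le_one_iff_abs_le_one _).2 (hx 1)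
    have hK1 : capital c x 1 = 1 := by simp [capital, mean]
    have hm1 : mean x 1 = x 1 := by simp [mean]
    rw [hK1, hm1, log_one, harmonic_zero, Rat.cast_zero]
    nlinarith [mul_nonneg hc0 (sub_nonneg.2 hc1), mul_nonneg (by positivity : 0 ≤ c / 2 + c ^ 2)
      (sub_nonneg.2 hx1)]
  | succ n ih =>
    have ht := abs_le.mp (abs_mul_mean_mul_le_half hc0 hc1 hx (n + 1) (n + 1 + 1))
    have hstep := potential_step_le (a := mean x (n + 1)) hc0 hc1 (by positivity : (0 : ℝ) < n + 1)
      (hx (n + 1 + 1))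
    have hlog := sub_sq_le_log_one_add ht.1
    rw [capital_succ, log_mul (capital_pos hc0 hc1 hx _).ne' (by linarith), mean_succ (n + 1),
      harmonic_succ]
    push_cast at ih ⊢
    have hharm : c / 2 * ((harmonic n : ℝ) + ((n : ℝ) + 1)⁻¹)
        = c / 2 * harmonic n + c / 2 / ((n : ℝ) + 1) := by ring
    linarith

end CapitalProcess

open CapitalProcess in
theorem capital_process_lower_bound (c : ℝ) (hc0 : 0 < c) (hc1 : c ≤ 1 / 2)
    (x : ℕ → ℝ) (hx : ∀ i, |x i| ≤ 1)
    (xbar : ℕ → ℝ) (hxbar : ∀ i, xbar i = (∑ j ∈ Finset.Icc 1 i, x j) / i)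
    (K : ℕ → ℝ) (hK : ∀ n, K n = ∏ i ∈ Finset.Icc 1 n, (1 + c * xbar (i - 1) * x i)) :
    (∀ n, 0 < K n) ∧
    ∀ n, 2 ≤ n → Real.log (K n) ≥
      (c / 2) * Real.log n * ((n : ℝ) * (xbar n) ^ 2 / Real.log n - 1) - (3 / 2) * c := by
  obtain rfl : xbar = mean x := funext hxbar
  obtain rfl : K = capital c x := funext hK
  refine ⟨capital_pos hc0.le hc1 hx, fun n hn => ?_⟩
  obtain ⟨m, rfl⟩ : ∃ m, n = m + 1 := ⟨n - 1, by omega⟩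
  have hm : (1 : ℝ) ≤ m := by exact_mod_cast (by omega : 1 ≤ m)
  have hlog : log ((m + 1 : ℕ) : ℝ) ≠ 0 := (log_pos (by push_cast; linarith)).ne'
  have hH : (harmonic m : ℝ) ≤ 1 + log ((m + 1 : ℕ) : ℝ) :=
    (harmonic_le_one_add_log m).trans (by gcongr; simp)
  have hinv := log_capital_succ_ge hc0.le hc1 hx m
  rw [mul_sub, mul_assoc _ (log _), mul_div_cancel₀ _ hlog]
  push_cast at hinv hH ⊢
  linarith [mul_le_mul_of_nonneg_left hH hc0.le, (by positivity : 0 ≤ c ^ 2 * mean x (m + 1) ^ 2)]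
end

section
/- Let 0 < c ≤ 1/2 and let x_1, x_2, ... be reals with |x_i| ≤ 1. Define x̄_i as the running average (x̄_0 = 0) and K_n = ∏_{i=1}^n (1 + c·x̄_{i−1}·x_i). If the sequence K_n is bounded above, then limsup_n √n·|x̄_n|/√(log n) ≤ 1; in particular x̄_n → 0. -/
/-!
Skeptic's log-capital dominates `(c/2) (n x̄ₙ² - log n)` up to a bounded error. Writing
`y = c x̄ₙ xₙ₊₁` for the bet, `log (1 + y) ≥ y - (9/10) y²` turns each factor of `K` into the
increment of `(c/2) n x̄ₙ²`, up to the harmonic term `(c/2)/(n+1) ≤ (c/2)(log (n+1) - log n)` and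
a summable `O(1/n²)` error; the strict margin `(9/10) c < 1/2` is what absorbs the cross term.
So the potential `log Kₙ - (c/2)(n x̄ₙ² - log n) - 10c/n` is eventually nondecreasing, and
bounded capital forces `n x̄ₙ² ≤ log n + O(1)`, which gives both conclusions.
-/

open Filter Real Finset Topology

theorem Real.sub_mul_sq_le_log_one_add {y : ℝ} (hy : -(1 / 2) ≤ y) :
    y - 9 / 10 * y ^ 2 ≤ log (1 + y) := by
  rcases le_or_gt 0 y with hy0 | hy0
  · calc y - 9 / 10 * y ^ 2 ≤ 2 * y / (y + 2) := by
          rw [le_div_iff₀ (by linarith)]; nlinarith [mul_nonneg hy0 (sq_nonneg y)]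
      _ ≤ log (1 + y) := le_log_one_add_of_nonneg hy0
  · -- fifth-order Taylor bound for `log (1 - x)` at `x = -y ∈ (0, 1/2]`
    have htaylor := abs_log_sub_add_sum_range_le (x := -y)
      (by rw [abs_neg, abs_lt]; constructor <;> linarith) 5
    rw [abs_neg, abs_of_neg hy0, sub_neg_eq_add] at htaylor
    have h := (abs_le.1 htaylor).1
    simp only [Finset.sum_range_succ, Finset.sum_range_zero] at h
    have htail : y ^ 6 / (1 + y) ≤ 2 * y ^ 6 := by
      rw [div_le_iff₀ (by linarith)]; nlinarith [pow_two_nonneg (y ^ 3)]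
    have hpoly : 0 ≤ 2 / 5 + y / 3 - y ^ 2 / 4 + y ^ 3 / 5 - 2 * y ^ 4 := by
      nlinarith [mul_nonneg (sq_nonneg y) (by linarith : (0 : ℝ) ≤ y + 1 / 2)]
    norm_num at h
    nlinarith [mul_nonneg (sq_nonneg y) hpoly]

theorem Real.inv_add_one_le_log_add_one_sub_log {N : ℝ} (hN : 0 < N) :
    (N + 1)⁻¹ ≤ log (N + 1) - log N := by
  have h := one_sub_inv_le_log_of_pos (show 0 < (N + 1) / N by positivity)
  rw [log_div (by linarith) hN.ne', inv_div] at h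
  calc (N + 1)⁻¹ = 1 - N / (N + 1) := by field_simp; ring
    _ ≤ _ := h

/-- With `a` the current average of `N` terms and `ξ` the next term, the left side is the increment
of `c/2 · n x̄ₙ²`. -/
theorem half_mul_sq_avg_increment_le {a ξ c N : ℝ} (hξ : ξ ^ 2 ≤ 1) (hc0 : 0 ≤ c)
    (hc1 : c ≤ 1 / 2) (hN : 18 ≤ N) :
    c / 2 * ((N + 1) * ((N * a + ξ) / (N + 1)) ^ 2 - N * a ^ 2) ≤
      c * a * ξ - 9 / 10 * (c * a * ξ) ^ 2 + c / 2 * (N + 1)⁻¹ +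
        (10 * c / N - 10 * c / (N + 1)) := by
  have hN0 : 0 < N := by linarith
  have hcξ : c * (N + 1) * a ^ 2 * ξ ^ 2 ≤ (N + 1) * a ^ 2 / 2 := by
    have : c * ξ ^ 2 ≤ 1 / 2 := by nlinarith
    nlinarith [mul_nonneg (by linarith : (0 : ℝ) ≤ N + 1) (sq_nonneg a)]
  -- AM-GM: `a ξ + (N - 9)/20 · a² ≥ -5 ξ² / (N - 9)`, and `5 N / (N - 9) ≤ 10` once `N ≥ 18`
  have hAM : -5 ≤ (N - 9) * (a * ξ + (N - 9) / 20 * a ^ 2) := by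
    nlinarith [sq_nonneg ((N - 9) * a + 10 * ξ)]
  have hcross : -10 ≤ N * (a * ξ + (N - 9) / 20 * a ^ 2) := by nlinarith
  have hP : 0 ≤ N * (a * ξ + (1 - ξ ^ 2) / 2 + N * a ^ 2 / 2 -
      9 / 10 * c * (N + 1) * a ^ 2 * ξ ^ 2) + 10 := by
    nlinarith [mul_nonneg hN0.le (by linarith : (0 : ℝ) ≤ 1 - ξ ^ 2)]
  refine sub_nonneg.1 ((mul_nonneg (by positivity : 0 ≤ c / (N * (N + 1))) hP).trans_eq ?_)
  field_simp
  ring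

section Asymptotics

variable {u : ℕ → ℝ} {C : ℝ}

theorem tendsto_zero_of_eventually_mul_sq_le_log_add
    (h : ∀ᶠ n : ℕ in atTop, n * u n ^ 2 ≤ log n + C) : Tendsto u atTop (𝓝 0) := by
  have hlim : Tendsto (fun n : ℕ => (log n + C) / n) atTop (𝓝 0) := by
    have hlog := (tendsto_pow_log_div_mul_add_atTop 1 0 1 one_ne_zero).comp
      tendsto_natCast_atTop_atTop
    have hC := tendsto_const_nhds (x := C).div_atTop tendsto_natCast_atTop_atTop
    simpa [add_div] using hlog.add hC
  have hsqrt : Tendsto (fun n : ℕ => √((log n + C) / n)) atTop (𝓝 0) := by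
    simpa only [sqrt_zero] using hlim.sqrt
  refine squeeze_zero_norm' ?_ hsqrt
  filter_upwards [h, eventually_gt_atTop 0] with n hn hpos
  rw [Real.norm_eq_abs, ← sqrt_sq_eq_abs]
  exact sqrt_le_sqrt ((le_div_iff₀' (by positivity)).2 hn)

theorem limsup_sqrt_mul_abs_div_sqrt_log_le_one
    (h : ∀ᶠ n : ℕ in atTop, n * u n ^ 2 ≤ log n + C) :
    atTop.limsup (fun n : ℕ => ((√n * |u n| / √(log n) : ℝ) : EReal)) ≤ 1 := by
  have hlog : Tendsto (fun n : ℕ => log n) atTop atTop :=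
    tendsto_log_atTop.comp tendsto_natCast_atTop_atTop
  have hbound : Tendsto (fun n : ℕ => √(1 + C / log n)) atTop (𝓝 1) := by
    simpa using ((tendsto_const_nhds (x := C).div_atTop hlog).const_add 1).sqrt
  have hle : ∀ᶠ n : ℕ in atTop,
      ((√n * |u n| / √(log n) : ℝ) : EReal) ≤ ((√(1 + C / log n) : ℝ) : EReal) := by
    filter_upwards [h, hlog.eventually_gt_atTop 0] with n hn hpos
    rw [EReal.coe_le_coe_iff, ← sqrt_sq_eq_abs, ← sqrt_mul n.cast_nonneg, ← sqrt_div' _ hpos.le]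
    refine sqrt_le_sqrt ((div_le_iff₀ hpos).2 ?_)
    rwa [add_mul, one_mul, div_mul_cancel₀ _ hpos.ne']
  calc atTop.limsup (fun n : ℕ => ((√n * |u n| / √(log n) : ℝ) : EReal))
      ≤ atTop.limsup (fun n : ℕ => ((√(1 + C / log n) : ℝ) : EReal)) := limsup_le_limsup hle
    _ = 1 := (EReal.tendsto_coe.2 hbound).limsup_eq

end Asymptotics

noncomputable def runningAvg (x : ℕ → ℝ) (n : ℕ) : ℝ := (∑ j ∈ Icc 1 n, x j) / n

noncomputable def capital (c : ℝ) (x : ℕ → ℝ) (n : ℕ) : ℝ :=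
  ∏ i ∈ Icc 1 n, (1 + c * runningAvg x (i - 1) * x i)

/-- The error term `10 c / n` telescopes the `O(1/n²)` errors of `half_mul_sq_avg_increment_le`. -/
noncomputable def potential (c : ℝ) (x : ℕ → ℝ) (n : ℕ) : ℝ :=
  log (capital c x n) - c / 2 * (n * runningAvg x n ^ 2 - log n) - 10 * c / n

section Capital

variable {c : ℝ} {x : ℕ → ℝ}

theorem runningAvg_succ (x : ℕ → ℝ) (n : ℕ) :
    runningAvg x (n + 1) = (n * runningAvg x n + x (n + 1)) / (n + 1) := by
  rcases n.eq_zero_or_pos with rfl | hn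
  · simp [runningAvg]
  · rw [runningAvg, runningAvg, sum_Icc_succ_top (by omega), mul_div_cancel₀ _ (by positivity)]
    push_cast
    rfl

theorem abs_runningAvg_le (hx : ∀ i, |x i| ≤ 1) (n : ℕ) : |runningAvg x n| ≤ 1 := by
  rw [runningAvg, abs_div, Nat.abs_cast]
  apply div_le_one_of_le₀ _ n.cast_nonneg
  calc |∑ j ∈ Icc 1 n, x j| ≤ ∑ j ∈ Icc 1 n, |x j| := abs_sum_le_sum_abs _ _
    _ ≤ ∑ j ∈ Icc 1 n, 1 := sum_le_sum fun j _ => hx j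
    _ = n := by simp

theorem capital_succ (c : ℝ) (x : ℕ → ℝ) (n : ℕ) :
    capital c x (n + 1) = capital c x n * (1 + c * runningAvg x n * x (n + 1)) := by
  rw [capital, capital, prod_Icc_succ_top (by omega), Nat.add_sub_cancel]

theorem neg_half_le_mul_runningAvg_mul (hc : |c| ≤ 1 / 2) (hx : ∀ i, |x i| ≤ 1) (n : ℕ) :
    -(1 / 2) ≤ c * runningAvg x n * x (n + 1) := by
  have h : |c * runningAvg x n * x (n + 1)| ≤ 1 / 2 * 1 * 1 := by
    rw [abs_mul, abs_mul]
    gcongr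
    exacts [abs_runningAvg_le hx n, hx _]
  linarith [neg_abs_le (c * runningAvg x n * x (n + 1))]

theorem capital_pos (hc : |c| ≤ 1 / 2) (hx : ∀ i, |x i| ≤ 1) (n : ℕ) : 0 < capital c x n := by
  induction n with
  | zero => simp [capital]
  | succ n ih =>
    rw [capital_succ]
    have := neg_half_le_mul_runningAvg_mul hc hx n
    exact mul_pos ih (by linarith)

theorem potential_le_succ (hc0 : 0 ≤ c) (hc1 : c ≤ 1 / 2) (hx : ∀ i, |x i| ≤ 1) {n : ℕ}
    (hn : 18 ≤ n) : potential c x n ≤ potential c x (n + 1) := by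
  have hc : |c| ≤ 1 / 2 := abs_le.2 ⟨by linarith, hc1⟩
  have hN : (18 : ℝ) ≤ n := by exact_mod_cast hn
  have hξ : x (n + 1) ^ 2 ≤ 1 := by rw [← sq_abs]; exact pow_le_one₀ (abs_nonneg _) (hx _)
  have hbet := neg_half_le_mul_runningAvg_mul hc hx n
  have hlog := Real.sub_mul_sq_le_log_one_add hbet
  have hlogn := mul_le_mul_of_nonneg_left
    (Real.inv_add_one_le_log_add_one_sub_log (N := n) (by linarith)) (by linarith : 0 ≤ c / 2)
  have hincr := half_mul_sq_avg_increment_le (a := runningAvg x n) hξ hc0 hc1 hN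
  rw [potential, potential, capital_succ, log_mul (capital_pos hc hx n).ne' (by linarith),
    runningAvg_succ]
  push_cast
  linarith

theorem exists_eventually_mul_sq_runningAvg_le (hc0 : 0 < c) (hc1 : c ≤ 1 / 2)
    (hx : ∀ i, |x i| ≤ 1) (hbdd : ∃ B, ∀ n, capital c x n ≤ B) :
    ∃ C, ∀ᶠ n : ℕ in atTop, n * runningAvg x n ^ 2 ≤ log n + C := by
  obtain ⟨B, hB⟩ := hbdd
  have hc : |c| ≤ 1 / 2 := abs_le.2 ⟨by linarith, hc1⟩
  have hmono := monotoneOn_nat_Ici_of_le_succ (f := potential c x) (k := 18)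
    fun n hn => potential_le_succ hc0.le hc1 hx hn
  refine ⟨(log B - potential c x 18) / (c / 2), ?_⟩
  filter_upwards [eventually_ge_atTop 18] with n hn
  have hΦ : potential c x 18 ≤
      log (capital c x n) - c / 2 * (n * runningAvg x n ^ 2 - log n) - 10 * c / n :=
    hmono (le_refl 18) hn hn
  have hK : log (capital c x n) ≤ log B := log_le_log (capital_pos hc hx n) (hB n)
  have h10 : 0 ≤ 10 * c / n := by positivity
  rw [← sub_le_iff_le_add', le_div_iff₀ (by positivity)]
  linarith

end Capital

theorem bounded_capital_implies_slln (c : ℝ) (hc0 : 0 < c) (hc1 : c ≤ 1 / 2)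
    (x : ℕ → ℝ) (hx : ∀ i, |x i| ≤ 1)
    (xbar : ℕ → ℝ) (hxbar : ∀ i, xbar i = (∑ j ∈ Finset.Icc 1 i, x j) / i)
    (K : ℕ → ℝ) (hK : ∀ n, K n = ∏ i ∈ Finset.Icc 1 n, (1 + c * xbar (i - 1) * x i))
    (hbdd : ∃ B : ℝ, ∀ n, K n ≤ B) :
    Filter.atTop.limsup
      (fun n : ℕ => ((Real.sqrt n * |xbar n| / Real.sqrt (Real.log n) : ℝ) : EReal)) ≤ 1 ∧
    Filter.Tendsto xbar Filter.atTop (nhds 0) := by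
  obtain rfl : xbar = runningAvg x := funext hxbar
  obtain rfl : K = capital c x := funext hK
  obtain ⟨C, hC⟩ := exists_eventually_mul_sq_runningAvg_le hc0 hc1 hx hbdd
  exact ⟨limsup_sqrt_mul_abs_div_sqrt_log_le_one hC,
    tendsto_zero_of_eventually_mul_sq_le_log_add hC⟩
end

section
/- Let H be a real Hilbert space and A a bounded self-adjoint positive operator on H with spectrum contained in [c₀, c₁], 0 < c₀ ≤ c₁ ≤ 1/2. Let x_1, x_2, ... ∈ H with ‖x_i‖ ≤ 1, let x̄_i = (x_1+...+x_i)/i with x̄_0 = 0, and define K_n = ∏_{i=1}^n (1 + ⟨A x̄_{i−1}, x_i⟩). If limsup_n √n·‖x̄_n‖/√(log n) > √(c₁/c₀), then limsup_n K_n = ∞. -/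
open scoped RealInnerProductSpace
open Filter

open Finset Real Metric

/-!
Write `qₙ = ⟪A x̄ₙ, x̄ₙ⟫` and `tₙ = ⟪A x̄ₙ, xₙ₊₁⟫`. Since `(n + 1) x̄ₙ₊₁ = n x̄ₙ + xₙ₊₁`, the
potential `n qₙ / 2` grows in round `n + 1` by `tₙ - tₙ / (n + 1) - n qₙ / (2 (n + 1))` plus at
most `c₁ / (2 (n + 1))`. Cauchy–Schwarz for the form of `A` gives `tₙ² ≤ c₁ qₙ`, and with
`c₁ ≤ 1 / 2` this absorbs the quadratic and cubic Taylor terms of `log (1 + tₙ)`, so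
`log (1 + tₙ)` dominates that increment up to `c₁ / (2 (n + 1)) + O(1 / n²)`. Summing,
`log Kₙ ≥ n qₙ / 2 - (c₁ / 2) log n - O(1)`. The spectrum of `A` lies in `[c₀, c₁]`, so
`qₙ ≥ c₀ ‖x̄ₙ‖²`; at the infinitely many `n` with `n ‖x̄ₙ‖² ≥ r² log n`, where `c₀ r² > c₁`,
this gives `log Kₙ ≥ ((c₀ r² - c₁) / 2) log n - O(1)`.
-/

theorem sub_log_one_add_le {t : ℝ} (ht : |t| ≤ 1 / 2) :
    t - log (1 + t) ≤ t ^ 2 / 2 + 4 / 5 * |t| ^ 3 := by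
  have hlt : |-t| < 1 := by rw [abs_neg]; linarith
  have htaylor := Real.abs_log_sub_add_sum_range_le hlt 5
  simp only [Finset.sum_range_succ, Finset.sum_range_zero, abs_neg, sub_neg_eq_add] at htaylor
  norm_num at htaylor
  have hrem : |t| ^ 6 / (1 - |t|) ≤ 2 * |t| ^ 6 := by
    rw [div_le_iff₀ (by linarith)]
    nlinarith [pow_nonneg (abs_nonneg t) 6]
  have hpoly : -t ^ 3 / 3 + t ^ 4 / 4 - t ^ 5 / 5 + 2 * |t| ^ 6 ≤ 4 / 5 * |t| ^ 3 := by
    obtain ⟨h₁, h₂⟩ := abs_le.1 ht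
    rcases le_or_gt 0 t with h | h
    · rw [abs_of_nonneg h]
      nlinarith [pow_nonneg h 3, pow_nonneg h 4, pow_nonneg h 5, pow_nonneg h 6]
    · rw [abs_of_neg h]
      nlinarith [pow_pos (neg_pos.2 h) 3, pow_pos (neg_pos.2 h) 4, pow_pos (neg_pos.2 h) 5,
        pow_pos (neg_pos.2 h) 6]
  linarith [(abs_le.1 htaylor).1]

theorem log_one_add_ge_of_sq_le_mul {s c t q : ℝ} (hs : 1 ≤ s) (hc : 0 < c) (hc2 : c ≤ 1 / 2)
    (htc : |t| ≤ c) (htq : t ^ 2 ≤ c * q) :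
    t - t / s - (s - 1) / (2 * s) * q - 6 / s ^ 2 ≤ log (1 + t) := by
  have hs0 : 0 < s := by linarith
  set a := |t|
  have ha0 : 0 ≤ a := abs_nonneg t
  have hlog : t - log (1 + t) ≤ a ^ 2 / 2 + 4 / 5 * (c * a ^ 2) := by
    have := sub_log_one_add_le (htc.trans hc2)
    rw [← sq_abs] at this
    nlinarith
  have hcoef : a ^ 2 / 2 + 4 / 5 * (c * a ^ 2) + a ^ 2 / 10 ≤ a ^ 2 / (2 * c) := by
    rw [le_div_iff₀ (by positivity)]
    nlinarith [sq_nonneg a, mul_nonneg (sq_nonneg a) hc.le]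
  have hq : a ^ 2 / (2 * c) - a / s / 2 ≤ (s - 1) / (2 * s) * q := by
    have hqa : a ^ 2 / c ≤ q := by rw [div_le_iff₀ hc, mul_comm, sq_abs]; exact htq
    have hac : a ^ 2 / c ≤ a := by rw [div_le_iff₀ hc]; nlinarith
    have hmul : (s - 1) / (2 * s) * (a ^ 2 / c) ≤ (s - 1) / (2 * s) * q :=
      mul_le_mul_of_nonneg_left hqa (div_nonneg (by linarith) (by linarith))
    have hsplit : (s - 1) / (2 * s) * (a ^ 2 / c) = a ^ 2 / (2 * c) - a ^ 2 / c / s / 2 := by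
      field_simp
    have : a ^ 2 / c / s / 2 ≤ a / s / 2 := by gcongr
    linarith
  have ht : -(a / s) ≤ t / s := by
    rw [← neg_div]; exact div_le_div_of_nonneg_right (neg_abs_le t) hs0.le
  have hamgm : 3 / 2 * (a / s) ≤ a ^ 2 / 10 + 6 / s ^ 2 := by
    have hsq : a ^ 2 / 10 + 6 / s ^ 2 - 3 / 2 * (a / s)
        = ((a - 15 / (2 * s)) ^ 2 + 15 / (4 * s ^ 2)) / 10 := by
      field_simp; ring
    have : 0 ≤ ((a - 15 / (2 * s)) ^ 2 + 15 / (4 * s ^ 2)) / 10 := by positivity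
    linarith
  linarith

theorem sum_range_inv_succ_sq_le_two (n : ℕ) : ∑ j ∈ range n, 1 / ((j : ℝ) + 1) ^ 2 ≤ 2 := by
  have h := sum_Ioo_inv_sq_le (α := ℝ) 0 (n + 1)
  rw [← Finset.Ico_add_one_left_eq_Ioo, ← Finset.sum_Ico_add', ← range_eq_Ico] at h
  simpa using h

theorem sum_range_inv_succ_le_one_add_log (n : ℕ) :
    ∑ j ∈ range n, 1 / ((j : ℝ) + 1) ≤ 1 + log n := by
  simpa [harmonic] using harmonic_le_one_add_log n

theorem IsSelfAdjoint.norm_sub_algebraMap_le {H : Type*} [NormedAddCommGroup H]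
    [InnerProductSpace ℝ H] [CompleteSpace H] {A : H →L[ℝ] H} (hA : IsSelfAdjoint A)
    {m r : ℝ} (hr : 0 ≤ r) (h : spectrum ℝ A ⊆ closedBall m r) :
    ‖A - algebraMap ℝ (H →L[ℝ] H) m‖ ≤ r := by
  set B := A - algebraMap ℝ (H →L[ℝ] H) m
  have hB : spectralRadius ℝ B = ENNReal.ofReal ‖B‖ := by
    rw [B.spectralRadius_eq_nnnorm (hA.sub (.algebraMap _ (.all m))), ← coe_nnnorm,
      ENNReal.ofReal_coe_nnreal]
  rw [← ENNReal.ofReal_le_ofReal_iff hr, ← hB]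
  refine iSup₂_le fun k hk => ?_
  rw [← spectrum.sub_singleton_eq, Set.mem_sub] at hk
  obtain ⟨a, ha, _, hm, rfl⟩ := hk
  rw [Set.mem_singleton_iff.1 hm, ← ENNReal.ofReal_coe_nnreal, coe_nnnorm, ← dist_eq_norm]
  exact ENNReal.ofReal_le_ofReal (h ha)

theorem IsSelfAdjoint.inner_map_self_mem_Icc {H : Type*} [NormedAddCommGroup H]
    [InnerProductSpace ℝ H] [CompleteSpace H] {A : H →L[ℝ] H} (hA : IsSelfAdjoint A)
    {a b : ℝ} (hab : a ≤ b) (h : spectrum ℝ A ⊆ Set.Icc a b) (v : H) :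
    a * ‖v‖ ^ 2 ≤ ⟪A v, v⟫ ∧ ⟪A v, v⟫ ≤ b * ‖v‖ ^ 2 := by
  rw [Real.Icc_eq_closedBall] at h
  set B := A - algebraMap ℝ (H →L[ℝ] H) ((a + b) / 2)
  have hB : |⟪B v, v⟫| ≤ (b - a) / 2 * ‖v‖ ^ 2 := calc
    |⟪B v, v⟫| ≤ ‖B‖ * ‖v‖ * ‖v‖ :=
      (abs_real_inner_le_norm _ _).trans
        (mul_le_mul_of_nonneg_right (B.le_opNorm v) (norm_nonneg v))
    _ ≤ (b - a) / 2 * ‖v‖ ^ 2 := by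
      rw [mul_assoc, ← sq]
      exact mul_le_mul_of_nonneg_right (hA.norm_sub_algebraMap_le (by linarith) h) (sq_nonneg _)
  have hAB : ⟪A v, v⟫ = (a + b) / 2 * ‖v‖ ^ 2 + ⟪B v, v⟫ := by
    simp [B, inner_sub_left, Algebra.algebraMap_eq_smul_one, real_inner_smul_left]
  constructor <;> linarith [abs_le.1 hB]

section QuadraticForm

variable {H : Type*} [NormedAddCommGroup H] [InnerProductSpace ℝ H] {A : H →L[ℝ] H}

theorem ContinuousLinearMap.inner_map_smul_add_self (hA : (A : H →ₗ[ℝ] H).IsSymmetric)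
    (a : ℝ) (u w : H) :
    ⟪A (a • u + w), a • u + w⟫ = a ^ 2 * ⟪A u, u⟫ + 2 * a * ⟪A u, w⟫ + ⟪A w, w⟫ := by
  have hwu : ⟪A w, u⟫ = ⟪A u, w⟫ := by rw [hA.apply_clm, real_inner_comm]
  simp only [map_add, map_smul, inner_add_left, inner_add_right, real_inner_smul_left,
    real_inner_smul_right, hwu]
  ring

theorem ContinuousLinearMap.IsPositive.inner_map_sq_le (hA : A.IsPositive) (u w : H) :
    ⟪A u, w⟫ ^ 2 ≤ ⟪A u, u⟫ * ⟪A w, w⟫ := by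
  have hwu : ⟪A w, u⟫ = ⟪A u, w⟫ := by rw [hA.isSymmetric.apply_clm, real_inner_comm]
  have hquad : ∀ r : ℝ, 0 ≤ ⟪A w, w⟫ * (r * r) + 2 * ⟪A u, w⟫ * r + ⟪A u, u⟫ := fun r => by
    have := hA.inner_nonneg_left (r • w + u)
    rw [A.inner_map_smul_add_self hA.isSymmetric, hwu] at this
    linarith
  have := discrim_le_zero hquad
  rw [discrim] at this
  nlinarith

end QuadraticForm

section RunningMean

variable {E : Type*} [NormedAddCommGroup E] [NormedSpace ℝ E] {x : ℕ → E}

noncomputable def runningMean (x : ℕ → E) (n : ℕ) : E := (n : ℝ)⁻¹ • ∑ j ∈ Icc 1 n, x j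

theorem natCast_smul_runningMean (x : ℕ → E) (n : ℕ) :
    (n : ℝ) • runningMean x n = ∑ j ∈ Icc 1 n, x j := by
  rcases n.eq_zero_or_pos with rfl | hn
  · simp
  · exact smul_inv_smul₀ (by positivity) _

theorem succ_smul_runningMean_succ (x : ℕ → E) (n : ℕ) :
    ((n : ℝ) + 1) • runningMean x (n + 1) = (n : ℝ) • runningMean x n + x (n + 1) := by
  rw [← Nat.cast_succ, natCast_smul_runningMean, natCast_smul_runningMean,
    sum_Icc_succ_top (Nat.le_add_left 1 n)]

theorem norm_runningMean_le {C : ℝ} (hx : ∀ i, ‖x i‖ ≤ C) (n : ℕ) : ‖runningMean x n‖ ≤ C := by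
  rcases n.eq_zero_or_pos with rfl | hn
  · simpa [runningMean] using (norm_nonneg _).trans (hx 0)
  · have hn' : (0 : ℝ) < n := by exact_mod_cast hn
    refine le_of_mul_le_mul_left ?_ hn'
    calc (n : ℝ) * ‖runningMean x n‖ = ‖∑ j ∈ Icc 1 n, x j‖ := by
          rw [← natCast_smul_runningMean, norm_smul, Real.norm_natCast]
      _ ≤ ∑ j ∈ Icc 1 n, C := norm_sum_le_of_le _ fun j _ => hx j
      _ = n * C := by simp

end RunningMean

section LinearProtocol

variable {H : Type*} [NormedAddCommGroup H] [InnerProductSpace ℝ H] {A : H →L[ℝ] H} {c : ℝ}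

theorem inner_map_self_le_of_norm_le_one (hc : 0 ≤ c) (hAc : ∀ v, ⟪A v, v⟫ ≤ c * ‖v‖ ^ 2)
    {v : H} (hv : ‖v‖ ≤ 1) : ⟪A v, v⟫ ≤ c :=
  (hAc v).trans (mul_le_of_le_one_right hc (pow_le_one₀ (norm_nonneg v) hv))

theorem inner_map_sq_le_mul_and_abs_le (hA : A.IsPositive) (hc : 0 ≤ c)
    (hAc : ∀ v, ⟪A v, v⟫ ≤ c * ‖v‖ ^ 2) {u w : H} (hu : ‖u‖ ≤ 1) (hw : ‖w‖ ≤ 1) :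
    ⟪A u, w⟫ ^ 2 ≤ c * ⟪A u, u⟫ ∧ |⟪A u, w⟫| ≤ c := by
  have hsq : ⟪A u, w⟫ ^ 2 ≤ ⟪A u, u⟫ * c := (hA.inner_map_sq_le u w).trans
    (mul_le_mul_of_nonneg_left (inner_map_self_le_of_norm_le_one hc hAc hw)
      (hA.inner_nonneg_left u))
  refine ⟨by linarith, abs_le_of_sq_le_sq ?_ hc⟩
  nlinarith [inner_map_self_le_of_norm_le_one hc hAc hu, hA.inner_nonneg_left u]

theorem one_add_inner_runningMean_pos (hA : A.IsPositive) (hc : 0 ≤ c) (hc2 : c < 1)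
    (hAc : ∀ v, ⟪A v, v⟫ ≤ c * ‖v‖ ^ 2) {x : ℕ → H} (hx : ∀ i, ‖x i‖ ≤ 1) (n : ℕ) :
    0 < 1 + ⟪A (runningMean x n), x (n + 1)⟫ := by
  have := (inner_map_sq_le_mul_and_abs_le hA hc hAc (norm_runningMean_le hx n) (hx (n + 1))).2
  linarith [neg_abs_le ⟪A (runningMean x n), x (n + 1)⟫]

theorem log_one_add_inner_runningMean_ge (hA : A.IsPositive) (hc : 0 < c) (hc2 : c ≤ 1 / 2)
    (hAc : ∀ v, ⟪A v, v⟫ ≤ c * ‖v‖ ^ 2) {x : ℕ → H} (hx : ∀ i, ‖x i‖ ≤ 1) (n : ℕ) :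
    ((n : ℝ) + 1) / 2 * ⟪A (runningMean x (n + 1)), runningMean x (n + 1)⟫
        - n / 2 * ⟪A (runningMean x n), runningMean x n⟫
        - (c / 2 * (1 / ((n : ℝ) + 1)) + 6 * (1 / ((n : ℝ) + 1) ^ 2))
      ≤ log (1 + ⟪A (runningMean x n), x (n + 1)⟫) := by
  set u := runningMean x n
  set w := x (n + 1)
  obtain ⟨htq, htc⟩ :=
    inner_map_sq_le_mul_and_abs_le hA hc.le hAc (norm_runningMean_le hx n) (hx (n + 1))
  have hw := inner_map_self_le_of_norm_le_one hc.le hAc (hx (n + 1))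
  have hs : (1 : ℝ) ≤ n + 1 := by linarith [n.cast_nonneg (α := ℝ)]
  have hlog := log_one_add_ge_of_sq_le_mul hs hc hc2 htc htq
  have hexp : ((n : ℝ) + 1) ^ 2 * ⟪A (runningMean x (n + 1)), runningMean x (n + 1)⟫
      = n ^ 2 * ⟪A u, u⟫ + 2 * n * ⟪A u, w⟫ + ⟪A w, w⟫ := by
    rw [← A.inner_map_smul_add_self hA.isSymmetric, ← succ_smul_runningMean_succ, map_smul,
      real_inner_smul_left, real_inner_smul_right]
    ring
  have hgap : ((n : ℝ) + 1) / 2 * ⟪A (runningMean x (n + 1)), runningMean x (n + 1)⟫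
      - n / 2 * ⟪A u, u⟫ - (c / 2 * (1 / ((n : ℝ) + 1)) + 6 * (1 / ((n : ℝ) + 1) ^ 2))
      - (⟪A u, w⟫ - ⟪A u, w⟫ / (n + 1) - (n + 1 - 1) / (2 * (n + 1)) * ⟪A u, u⟫
        - 6 / ((n : ℝ) + 1) ^ 2)
      = (⟪A w, w⟫ - c) / (2 * (n + 1)) := by
    have hs0 : (n : ℝ) + 1 ≠ 0 := by positivity
    field_simp
    linear_combination ((n : ℝ) + 1) * hexp
  have : (⟪A w, w⟫ - c) / (2 * (n + 1)) ≤ 0 :=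
    div_nonpos_of_nonpos_of_nonneg (by linarith) (by positivity)
  linarith

theorem log_prod_one_add_inner_runningMean_ge (hA : A.IsPositive) (hc : 0 < c)
    (hc2 : c ≤ 1 / 2) (hAc : ∀ v, ⟪A v, v⟫ ≤ c * ‖v‖ ^ 2) {x : ℕ → H} (hx : ∀ i, ‖x i‖ ≤ 1)
    (n : ℕ) :
    n / 2 * ⟪A (runningMean x n), runningMean x n⟫ - c / 2 * (1 + log n) - 12
      ≤ log (∏ j ∈ range n, (1 + ⟪A (runningMean x j), x (j + 1)⟫)) := by
  rw [log_prod fun j _ => (one_add_inner_runningMean_pos hA hc.le (by linarith) hAc hx j).ne']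
  have htelescope : (n : ℝ) / 2 * ⟪A (runningMean x n), runningMean x n⟫
      = ∑ j ∈ range n, (((j : ℝ) + 1) / 2 * ⟪A (runningMean x (j + 1)), runningMean x (j + 1)⟫
        - j / 2 * ⟪A (runningMean x j), runningMean x j⟫) := by
    have := sum_range_sub (fun j : ℕ => (j : ℝ) / 2 * ⟪A (runningMean x j), runningMean x j⟫) n
    simp only [Nat.cast_add, Nat.cast_one, Nat.cast_zero, zero_div, zero_mul, sub_zero] at this
    exact this.symm
  have herror : ∑ j ∈ range n, (c / 2 * (1 / ((j : ℝ) + 1)) + 6 * (1 / ((j : ℝ) + 1) ^ 2))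
      ≤ c / 2 * (1 + log n) + 12 := by
    rw [sum_add_distrib, ← mul_sum, ← mul_sum]
    linarith [sum_range_inv_succ_sq_le_two n,
      mul_le_mul_of_nonneg_left (sum_range_inv_succ_le_one_add_log n) (by positivity : 0 ≤ c / 2)]
  have hsteps := sum_le_sum fun j (_ : j ∈ range n) =>
    log_one_add_inner_runningMean_ge hA hc hc2 hAc hx j
  rw [sum_sub_distrib] at hsteps
  linarith

end LinearProtocol

theorem limsup_coe_eq_top_of_frequently_le_log {ι : Type*} {l : Filter ι} {K g : ι → ℝ}
    (hg : Tendsto g l atTop) (hK : ∀ i, 0 < K i) (h : ∃ᶠ i in l, g i ≤ log (K i)) :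
    limsup (fun i => (K i : EReal)) l = ⊤ := by
  rw [EReal.eq_top_iff_forall_lt]
  intro y
  have hexp : ∀ᶠ i in l, y + 1 ≤ exp (g i) := (tendsto_exp_atTop.comp hg).eventually_ge_atTop _
  refine (EReal.coe_lt_coe_iff.2 (lt_add_one y)).trans_le (le_limsup_of_frequently_le ?_)
  refine (h.and_eventually hexp).mono fun i ⟨hlog, hy⟩ => EReal.coe_le_coe_iff.2 ?_
  exact hy.trans ((exp_le_exp.2 hlog).trans_eq (exp_log (hK i)))

theorem exists_frequently_sq_mul_log_le_of_lt_limsup {u : ℕ → ℝ} {a : ℝ} (ha : 0 ≤ a)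
    (h : (a : EReal) < limsup (fun n : ℕ => ((√n * u n / √(log n) : ℝ) : EReal)) atTop) :
    ∃ r, a < r ∧ ∃ᶠ n : ℕ in atTop, r ^ 2 * log n ≤ n * u n ^ 2 := by
  obtain ⟨r, har, hr⟩ := EReal.exists_between_coe_real h
  rw [EReal.coe_lt_coe_iff] at har
  refine ⟨r, har, ((frequently_lt_of_lt_limsup (h := hr)).and_eventually
    (eventually_gt_atTop 1)).mono fun n ⟨hn, hn1⟩ => ?_⟩
  have hlog : 0 < log n := log_pos (by exact_mod_cast hn1)
  have hlt := (lt_div_iff₀ (sqrt_pos.2 hlog)).1 (EReal.coe_lt_coe_iff.1 hn)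
  have hsq := pow_le_pow_left₀ (by have := ha.trans_lt har; positivity) hlt.le 2
  rwa [mul_pow, mul_pow, sq_sqrt hlog.le, sq_sqrt n.cast_nonneg] at hsq

theorem multivariate_weakly_forcing_slln {H : Type*} [NormedAddCommGroup H]
    [InnerProductSpace ℝ H] [CompleteSpace H]
    (A : H →L[ℝ] H) (hsa : IsSelfAdjoint A)
    (c₀ c₁ : ℝ) (hc0 : 0 < c₀) (hc01 : c₀ ≤ c₁) (hc1 : c₁ ≤ 1 / 2)
    (hspec : spectrum ℝ A ⊆ Set.Icc c₀ c₁)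
    (x : ℕ → H) (hx : ∀ i, ‖x i‖ ≤ 1)
    (xbar : ℕ → H) (hxbar : ∀ i, xbar i = (i : ℝ)⁻¹ • ∑ j ∈ Finset.Icc 1 i, x j)
    (K : ℕ → ℝ) (hK : ∀ n, K n = ∏ i ∈ Finset.Icc 1 n, (1 + ⟪A (xbar (i - 1)), x i⟫))
    (hls : Filter.atTop.limsup
      (fun n : ℕ => ((Real.sqrt n * ‖xbar n‖ / Real.sqrt (Real.log n) : ℝ) : EReal))
      > ((Real.sqrt (c₁ / c₀) : ℝ) : EReal)) :
    Filter.atTop.limsup (fun n : ℕ => ((K n : ℝ) : EReal)) = ⊤ := by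
  obtain rfl : xbar = runningMean x := funext hxbar
  have hK' : ∀ n, K n = ∏ j ∈ range n, (1 + ⟪A (runningMean x j), x (j + 1)⟫) := fun n => by
    rw [hK, ← Ico_add_one_right_eq_Icc, prod_Ico_eq_prod_range]
    simp [add_comm]
  have hc₁ : 0 < c₁ := hc0.trans_le hc01
  have hform := hsa.inner_map_self_mem_Icc hc01 hspec
  have hA : A.IsPositive := ⟨hsa.isSymmetric, fun v => by
    simpa [ContinuousLinearMap.reApplyInnerSelf_apply] using
      (mul_nonneg hc0.le (sq_nonneg ‖v‖)).trans (hform v).1⟩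
  obtain ⟨r, hr, hfreq⟩ := exists_frequently_sq_mul_log_le_of_lt_limsup (sqrt_nonneg _) hls
  have hδ : 0 < (c₀ * r ^ 2 - c₁) / 2 := by
    have := (sqrt_lt' ((sqrt_nonneg _).trans_lt hr)).1 hr
    rw [div_lt_iff₀ hc0] at this
    linarith
  refine limsup_coe_eq_top_of_frequently_le_log
    (g := fun n => (c₀ * r ^ 2 - c₁) / 2 * log n - (c₁ / 2 + 12))
    (tendsto_atTop_add_const_right _ _
      ((tendsto_log_atTop.comp tendsto_natCast_atTop_atTop).const_mul_atTop hδ))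
    (fun n => hK' n ▸ prod_pos fun j _ =>
      one_add_inner_runningMean_pos hA hc₁.le (by linarith) (fun v => (hform v).2) hx j)
    (hfreq.mono fun n hsq => ?_)
  have hlogK :=
    hK' n ▸ log_prod_one_add_inner_runningMean_ge hA hc₁ hc1 (fun v => (hform v).2) hx n
  have hq := mul_le_mul_of_nonneg_left (hform (runningMean x n)).1 (n.cast_nonneg (α := ℝ))
  nlinarith
end

section
/- Let H be a real Hilbert space, y_1, y_2, ... ∈ H with ‖y_i‖² ≤ c₁ ≤ 1/2 for all i, and ȳ_i = (y_1+...+y_i)/i with ȳ_0 = 0. Then for n ≥ 2, ∑_{i=1}^n ⟨ȳ_{i−1}, y_i⟩ ≥ (1/2)∑_{i=1}^n ‖ȳ_i‖² + (n/2)‖ȳ_n‖² − (c₁/2)(3 + log(n−1)). -/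
/-!
Writing `S k = ∑_{j ≤ k} y j = k • ȳ k`, the identity `‖S k + y (k+1)‖² = ‖S k‖² + 2⟪S k, y (k+1)⟫ + ‖y (k+1)‖²`
gives `2k⟪ȳ k, y (k+1)⟫ = (k+1)²‖ȳ (k+1)‖² - k²‖ȳ k‖² - ‖y (k+1)‖²`. Dividing by `2k` and dropping
`‖ȳ (k+1)‖² / (2k) ≥ 0`, the terms telescope; the errors `‖y (k+1)‖² / (2k) ≤ c₁ / (2k)` add up to
`(c₁/2) H_{n-1} ≤ (c₁/2)(1 + log (n-1))`, and the first term contributes `‖y 1‖² ≤ c₁`.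
-/

open scoped RealInnerProductSpace

open Finset

section

variable {H : Type*} [NormedAddCommGroup H] [InnerProductSpace ℝ H] {y ybar : ℕ → H}

lemma natCast_smul_eq_sum_Icc (hybar : ∀ i, ybar i = (i : ℝ)⁻¹ • ∑ j ∈ Icc 1 i, y j) (k : ℕ) :
    (k : ℝ) • ybar k = ∑ j ∈ Icc 1 k, y j := by
  rcases Nat.eq_zero_or_pos k with rfl | hk
  · simp
  · rw [hybar, smul_smul, mul_inv_cancel₀ (by positivity), one_smul]

lemma two_mul_inner_avg_succ (hybar : ∀ i, ybar i = (i : ℝ)⁻¹ • ∑ j ∈ Icc 1 i, y j) (k : ℕ) :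
    2 * k * ⟪ybar k, y (k + 1)⟫ =
      ((k : ℝ) + 1) ^ 2 * ‖ybar (k + 1)‖ ^ 2 - (k : ℝ) ^ 2 * ‖ybar k‖ ^ 2 - ‖y (k + 1)‖ ^ 2 := by
  have hS := natCast_smul_eq_sum_Icc hybar
  have hnorm : ∀ k : ℕ, (k : ℝ) ^ 2 * ‖ybar k‖ ^ 2 = ‖∑ j ∈ Icc 1 k, y j‖ ^ 2 := fun k => by
    rw [← hS, norm_smul, mul_pow, Real.norm_natCast]
  calc 2 * k * ⟪ybar k, y (k + 1)⟫ = 2 * ⟪∑ j ∈ Icc 1 k, y j, y (k + 1)⟫ := by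
        rw [← hS, real_inner_smul_left]; ring
    _ = ‖∑ j ∈ Icc 1 k, y j + y (k + 1)‖ ^ 2 - ‖∑ j ∈ Icc 1 k, y j‖ ^ 2 - ‖y (k + 1)‖ ^ 2 := by
        rw [norm_add_sq_real]; ring
    _ = _ := by
        rw [← sum_Icc_succ_top (by omega), ← hnorm, ← hnorm]; push_cast; ring

lemma inner_avg_succ_ge (hybar : ∀ i, ybar i = (i : ℝ)⁻¹ • ∑ j ∈ Icc 1 i, y j) {k : ℕ}
    (hk : 0 < k) :
    ((k : ℝ) + 2) / 2 * ‖ybar (k + 1)‖ ^ 2 - k / 2 * ‖ybar k‖ ^ 2 - ‖y (k + 1)‖ ^ 2 / (2 * k)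
      ≤ ⟪ybar k, y (k + 1)⟫ := by
  rw [sub_le_iff_le_add, ← sub_nonneg]
  -- `(k+1)² = k(k+2) + 1`: what is left over is `‖ȳ (k+1)‖² / (2k)`
  have key : ⟪ybar k, y (k + 1)⟫ + ‖y (k + 1)‖ ^ 2 / (2 * k)
      - (((k : ℝ) + 2) / 2 * ‖ybar (k + 1)‖ ^ 2 - k / 2 * ‖ybar k‖ ^ 2)
      = ‖ybar (k + 1)‖ ^ 2 / (2 * k) := by
    field_simp
    linear_combination two_mul_inner_avg_succ hybar k
  rw [key]
  positivity

lemma sum_inner_avg_ge {c : ℝ} (hy : ∀ i, ‖y i‖ ^ 2 ≤ c)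
    (hybar : ∀ i, ybar i = (i : ℝ)⁻¹ • ∑ j ∈ Icc 1 i, y j) {n : ℕ} (hn : 1 ≤ n) :
    (1 / 2) * ∑ i ∈ Icc 1 n, ‖ybar i‖ ^ 2 + (n : ℝ) / 2 * ‖ybar n‖ ^ 2 - c
        - c / 2 * harmonic (n - 1)
      ≤ ∑ i ∈ Icc 1 n, ⟪ybar (i - 1), y i⟫ := by
  induction n, hn using Nat.le_induction with
  | base =>
    simpa [hybar, ← two_mul] using hy 1
  | succ n hn ih =>
    have hstep := inner_avg_succ_ge hybar hn
    have herr : ‖y (n + 1)‖ ^ 2 / (2 * n) ≤ c / 2 * (n : ℝ)⁻¹ := by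
      rw [← div_eq_mul_inv, div_div]
      gcongr
      exact hy _
    have hn' : n - 1 + 1 = n := by omega
    rw [sum_Icc_succ_top (by omega), sum_Icc_succ_top (by omega), Nat.add_sub_cancel,
      ← hn', harmonic_succ, hn']
    push_cast
    linarith

end

theorem hilbert_summation_lower_bound_general {H : Type*} [NormedAddCommGroup H]
    [InnerProductSpace ℝ H]
    (c₁ : ℝ)
    (y : ℕ → H) (hy : ∀ i, ‖y i‖ ^ 2 ≤ c₁)
    (ybar : ℕ → H) (hybar : ∀ i, ybar i = (i : ℝ)⁻¹ • ∑ j ∈ Finset.Icc 1 i, y j)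
    (n : ℕ) (hn : 2 ≤ n) :
    ∑ i ∈ Finset.Icc 1 n, ⟪ybar (i - 1), y i⟫ ≥
      (1 / 2) * ∑ i ∈ Finset.Icc 1 n, ‖ybar i‖ ^ 2 + ((n : ℝ) / 2) * ‖ybar n‖ ^ 2
      - (c₁ / 2) * (3 + Real.log ((n : ℝ) - 1)) := by
  have hc : 0 ≤ c₁ := (sq_nonneg _).trans (hy 0)
  have hharm : (harmonic (n - 1) : ℝ) ≤ 1 + Real.log ((n : ℝ) - 1) := by
    simpa [Nat.cast_sub (by omega : 1 ≤ n)] using harmonic_le_one_add_log (n - 1)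
  have hsum := sum_inner_avg_ge hy hybar (by omega : 1 ≤ n)
  have := mul_le_mul_of_nonneg_left hharm (by positivity : 0 ≤ c₁ / 2)
  linarith

theorem hilbert_summation_lower_bound {H : Type*} [NormedAddCommGroup H]
    [InnerProductSpace ℝ H] [CompleteSpace H]
    (c₁ : ℝ) (hc1 : c₁ ≤ 1 / 2)
    (y : ℕ → H) (hy : ∀ i, ‖y i‖ ^ 2 ≤ c₁)
    (ybar : ℕ → H) (hybar : ∀ i, ybar i = (i : ℝ)⁻¹ • ∑ j ∈ Finset.Icc 1 i, y j)
    (n : ℕ) (hn : 2 ≤ n) :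
    ∑ i ∈ Finset.Icc 1 n, ⟪ybar (i - 1), y i⟫ ≥
      (1 / 2) * ∑ i ∈ Finset.Icc 1 n, ‖ybar i‖ ^ 2 + ((n : ℝ) / 2) * ‖ybar n‖ ^ 2
      - (c₁ / 2) * (3 + Real.log ((n : ℝ) - 1)) :=
  hilbert_summation_lower_bound_general c₁ y hy ybar hybar n hn
end

section
/- Let X_1, X_2, ... be a bounded martingale difference sequence with |X_n| ≤ 1 almost surely, adapted to a filtration, and let X̄_n = (X_1+...+X_n)/n. Then for any α > 1/2, √n·|X̄_n|/(log n)^α → 0 almost surely as n → ∞. -/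
/-!
The partial sums `S n = X 1 + ⋯ + X n` form a martingale with increments bounded by `1`, so the
increments are orthogonal in `L²`: `E[S n ^ 2] ≤ n` and `S ^ 2` is a submartingale. Doob's maximal
inequality for `S ^ 2` (Kolmogorov's inequality) bounds the probability that
`|S k| ≥ ε √(2 ^ j) (log 2 ^ j) ^ α` for some `k ≤ 2 ^ (j + 1)` by `2 / (ε² (j log 2) ^ (2α))`,
which is summable because `2α > 1`. By Borel–Cantelli these events almost surely occur only
finitely often; as every `n` lies in a block `[2 ^ j, 2 ^ (j + 1))` and `√x (log x) ^ α` is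
increasing, `|S n| / (√n (log n) ^ α) < ε` eventually.
-/

open MeasureTheory Filter Topology

theorem MeasureTheory.ae_eventually_notMem_of_measureReal_le {Ω : Type*} {m : MeasurableSpace Ω}
    {μ : Measure Ω} [IsFiniteMeasure μ] {A : ℕ → Set Ω} {f : ℕ → ℝ} (hf : Summable f)
    (hA : ∀ᶠ j in atTop, μ.real (A j) ≤ f j) : ∀ᵐ ω ∂μ, ∀ᶠ j in atTop, ω ∉ A j := by
  have hsum : Summable fun j => μ.real (A j) :=
    hf.of_norm_bounded_eventually_nat
      (hA.mono fun j h => by rwa [Real.norm_of_nonneg measureReal_nonneg])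
  refine ae_eventually_notMem ?_
  have hA' (j : ℕ) : μ (A j) = ENNReal.ofReal (μ.real (A j)) := (ofReal_measureReal).symm
  rw [tsum_congr hA', ← ENNReal.ofReal_tsum_of_nonneg (fun j => measureReal_nonneg) hsum]
  exact ENNReal.ofReal_ne_top

theorem eventually_lt_of_forall_le_two_pow_succ {s c : ℕ → ℝ} (hc : Monotone c)
    (h : ∀ᶠ j in atTop, ∀ k ≤ 2 ^ (j + 1), s k < c (2 ^ j)) :
    ∀ᶠ n in atTop, s n < c n := by
  obtain ⟨J, hJ⟩ := eventually_atTop.1 h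
  refine eventually_atTop.2 ⟨2 ^ J, fun n hn => ?_⟩
  have hn0 : n ≠ 0 := (Nat.pos_of_ne_zero (pow_ne_zero J two_ne_zero)).trans_le hn |>.ne'
  exact (hJ _ ((Nat.le_log_iff_pow_le one_lt_two hn0).2 hn) n
    (Nat.lt_pow_succ_log_self one_lt_two n).le).trans_le (hc (Nat.pow_log_le_self 2 hn0))

theorem tendsto_abs_div_of_forall_le_two_pow_succ {s b : ℕ → ℝ} (hb : Monotone b)
    (h : ∀ ε > 0, ∀ᶠ j in atTop, ∀ k ≤ 2 ^ (j + 1), |s k| < ε * b (2 ^ j)) :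
    Tendsto (fun n => |s n| / b n) atTop (𝓝 0) := by
  have hlt (ε : ℝ) (hε : 0 < ε) : ∀ᶠ n in atTop, |s n| < ε * b n :=
    eventually_lt_of_forall_le_two_pow_succ (fun _ _ hmn => by gcongr; exact hb hmn) (h ε hε)
  refine tendsto_order.2 ⟨fun a ha => ?_, fun ε hε => ?_⟩
  · filter_upwards [hlt 1 one_pos] with n hn
    exact ha.trans_le (div_nonneg (abs_nonneg _) (by linarith [abs_nonneg (s n)]))
  · filter_upwards [hlt ε hε] with n hn
    have hbn : 0 < b n := pos_of_mul_pos_right ((abs_nonneg _).trans_lt hn) hε.le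
    rwa [div_lt_iff₀ hbn]

theorem monotone_sqrt_mul_log_rpow {α : ℝ} (hα : 0 ≤ α) :
    Monotone fun n : ℕ => √(n : ℝ) * Real.log n ^ α := by
  intro m n hmn
  rcases Nat.eq_zero_or_pos m with rfl | hm
  · simp only [CharP.cast_eq_zero, Real.sqrt_zero, zero_mul]
    exact mul_nonneg (Real.sqrt_nonneg _) (Real.rpow_nonneg (Real.log_natCast_nonneg n) α)
  · dsimp only
    gcongr

namespace MeasureTheory.Martingale

variable {Ω : Type*} {m : MeasurableSpace Ω} {μ : Measure Ω}
  {ℱ : Filtration ℕ m} {S : ℕ → Ω → ℝ}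

theorem setIntegral_mul_sub_eq_zero [IsFiniteMeasure μ] (hS : Martingale S ℱ μ)
    (hL2 : ∀ n, MemLp (S n) 2 μ)
    {n : ℕ} {s : Set Ω} (hs : MeasurableSet[ℱ n] s) :
    ∫ ω in s, S n ω * (S (n + 1) ω - S n ω) ∂μ = 0 := by
  have hnext : Integrable (S n * S (n + 1)) μ := (hL2 n).integrable_mul (hL2 (n + 1))
  have hsame : Integrable (S n * S n) μ := (hL2 n).integrable_mul (hL2 n)
  have hpull : μ[S n * S (n + 1) | ℱ n] =ᵐ[μ] S n * S n :=
    (condExp_mul_of_stronglyMeasurable_left (hS.stronglyMeasurable n) hnext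
      (hS.integrable _)).trans ((hS.condExp_ae_eq n.le_succ).mono fun ω h => by simp [h])
  calc ∫ ω in s, S n ω * (S (n + 1) ω - S n ω) ∂μ
      = ∫ ω in s, (S n * S (n + 1)) ω ∂μ - ∫ ω in s, (S n * S n) ω ∂μ := by
        simp_rw [mul_sub]; exact integral_sub hnext.integrableOn hsame.integrableOn
    _ = 0 := by
        rw [← setIntegral_condExp (ℱ.le n) hnext hs,
          setIntegral_congr_ae (ℱ.le n s hs) (hpull.mono fun ω h _ => h), sub_self]

theorem setIntegral_sq_succ [IsFiniteMeasure μ] (hS : Martingale S ℱ μ)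
    (hL2 : ∀ n, MemLp (S n) 2 μ)
    {n : ℕ} {s : Set Ω} (hs : MeasurableSet[ℱ n] s) :
    ∫ ω in s, S (n + 1) ω ^ 2 ∂μ =
      ∫ ω in s, S n ω ^ 2 ∂μ + ∫ ω in s, (S (n + 1) ω - S n ω) ^ 2 ∂μ := by
  have hinc : MemLp (fun ω => S (n + 1) ω - S n ω) 2 μ := (hL2 (n + 1)).sub (hL2 n)
  have hcross : Integrable (fun ω => 2 * (S n ω * (S (n + 1) ω - S n ω))) μ :=
    ((hL2 n).integrable_mul hinc).const_mul 2
  calc ∫ ω in s, S (n + 1) ω ^ 2 ∂μ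
      = ∫ ω in s, (S n ω ^ 2 + (S (n + 1) ω - S n ω) ^ 2
          + 2 * (S n ω * (S (n + 1) ω - S n ω))) ∂μ := by
        congr 1; ext ω; ring
    _ = _ := by
        have hsq : Integrable (fun ω => S n ω ^ 2 + (S (n + 1) ω - S n ω) ^ 2) μ :=
          (hL2 n).integrable_sq.add hinc.integrable_sq
        rw [integral_add hsq.integrableOn hcross.integrableOn,
          integral_add (hL2 n).integrable_sq.integrableOn hinc.integrable_sq.integrableOn,
          integral_const_mul, setIntegral_mul_sub_eq_zero hS hL2 hs, mul_zero, add_zero]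

theorem submartingale_sq [IsFiniteMeasure μ] (hS : Martingale S ℱ μ)
    (hL2 : ∀ n, MemLp (S n) 2 μ) :
    Submartingale (fun n ω => S n ω ^ 2) ℱ μ :=
  submartingale_of_setIntegral_le_succ (fun n => (hS.stronglyAdapted n).pow 2)
    (fun n => (hL2 n).integrable_sq) fun n s hs => by
      rw [setIntegral_sq_succ hS hL2 hs]
      exact le_add_of_nonneg_right (integral_nonneg fun ω => sq_nonneg _)

theorem kolmogorov_maximal_ineq [IsFiniteMeasure μ] (hS : Martingale S ℱ μ)
    (hL2 : ∀ n, MemLp (S n) 2 μ)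
    {L : ℝ} (hL : 0 ≤ L) (N : ℕ) :
    L ^ 2 * μ.real {ω | ∃ k ≤ N, L ≤ |S k ω|} ≤ ∫ ω, S N ω ^ 2 ∂μ := by
  have hmax := maximal_ineq (hS.submartingale_sq hL2) (fun n ω => sq_nonneg (S n ω))
    (ε := (L ^ 2).toNNReal) N
  have hset : {ω | ((L ^ 2).toNNReal : ℝ) ≤ (Finset.range (N + 1)).sup'
      Finset.nonempty_range_add_one fun k => S k ω ^ 2} = {ω | ∃ k ≤ N, L ≤ |S k ω|} := by
    ext ω
    simp only [Real.coe_toNNReal _ (sq_nonneg L), Set.mem_ofPred_eq, Finset.le_sup'_iff,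
      Finset.mem_range, Nat.lt_succ_iff, ← sq_abs (S _ ω),
      pow_le_pow_iff_left₀ hL (abs_nonneg _) two_ne_zero]
  beta_reduce at hmax
  rw [hset, ENNReal.le_ofReal_iff_toReal_le (by finiteness)
    (setIntegral_nonneg_of_ae (.of_forall fun ω => sq_nonneg _))] at hmax
  calc L ^ 2 * μ.real {ω | ∃ k ≤ N, L ≤ |S k ω|}
      ≤ ∫ ω in {ω | ∃ k ≤ N, L ≤ |S k ω|}, S N ω ^ 2 ∂μ := by
        simpa [ENNReal.toReal_mul, measureReal_def, sq_nonneg] using hmax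
    _ ≤ ∫ ω, S N ω ^ 2 ∂μ :=
        setIntegral_le_integral (hL2 N).integrable_sq (.of_forall fun ω => sq_nonneg _)

theorem memLp_two_of_abs_sub_le_one [IsFiniteMeasure μ] (hS : Martingale S ℱ μ)
    (hS0 : S 0 = 0) (hinc : ∀ n, ∀ᵐ ω ∂μ, |S (n + 1) ω - S n ω| ≤ 1) (n : ℕ) :
    MemLp (S n) 2 μ := by
  induction n with
  | zero => simp [hS0]
  | succ n ih =>
    have hstep : MemLp (fun ω => S (n + 1) ω - S n ω) 2 μ :=
      .of_bound ((hS.integrable _).sub (hS.integrable n)).aestronglyMeasurable 1 (hinc n)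
    convert ih.add hstep using 1
    ext ω
    simp

theorem integral_sq_le_of_abs_sub_le_one [IsProbabilityMeasure μ] (hS : Martingale S ℱ μ)
    (hS0 : S 0 = 0) (hinc : ∀ n, ∀ᵐ ω ∂μ, |S (n + 1) ω - S n ω| ≤ 1) (n : ℕ) :
    ∫ ω, S n ω ^ 2 ∂μ ≤ n := by
  have hL2 := hS.memLp_two_of_abs_sub_le_one hS0 hinc
  induction n with
  | zero => simp [hS0]
  | succ n ih =>
    have hstep : ∫ ω, (S (n + 1) ω - S n ω) ^ 2 ∂μ ≤ 1 :=
      (integral_mono_ae ((hL2 (n + 1)).sub (hL2 n)).integrable_sq (integrable_const 1)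
        ((hinc n).mono fun ω h => (sq_le_one_iff_abs_le_one _).2 h)).trans (by simp)
    have := hS.setIntegral_sq_succ hL2 (n := n) MeasurableSet.univ
    simp only [setIntegral_univ] at this
    push_cast
    linarith

theorem kolmogorov_maximal_ineq_of_abs_sub_le_one [IsProbabilityMeasure μ] (hS : Martingale S ℱ μ)
    (hS0 : S 0 = 0) (hinc : ∀ n, ∀ᵐ ω ∂μ, |S (n + 1) ω - S n ω| ≤ 1)
    {L : ℝ} (hL : 0 ≤ L) (N : ℕ) : L ^ 2 * μ.real {ω | ∃ k ≤ N, L ≤ |S k ω|} ≤ N :=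
  (hS.kolmogorov_maximal_ineq (hS.memLp_two_of_abs_sub_le_one hS0 hinc) hL N).trans
    (hS.integral_sq_le_of_abs_sub_le_one hS0 hinc N)

theorem ae_eventually_forall_le_two_pow_succ_abs_lt [IsProbabilityMeasure μ] (hS : Martingale S ℱ μ)
    (hS0 : S 0 = 0) (hinc : ∀ n, ∀ᵐ ω ∂μ, |S (n + 1) ω - S n ω| ≤ 1) {α : ℝ} (hα : 1 / 2 < α)
    {ε : ℝ} (hε : 0 < ε) :
    ∀ᵐ ω ∂μ, ∀ᶠ j in atTop, ∀ k ≤ 2 ^ (j + 1),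
      |S k ω| < ε * (√((2 ^ j : ℕ) : ℝ) * Real.log (2 ^ j : ℕ) ^ α) := by
  set L : ℕ → ℝ := fun j => ε * (√((2 ^ j : ℕ) : ℝ) * Real.log (2 ^ j : ℕ) ^ α) with hL
  have hlog2 : 0 < Real.log 2 := Real.log_pos one_lt_two
  have hLsq (j : ℕ) : L j ^ 2 = ε ^ 2 * 2 ^ j * ((j : ℝ) * Real.log 2) ^ (α * 2) := by
    simp only [hL]
    push_cast
    rw [Real.log_pow, mul_pow, mul_pow, Real.sq_sqrt (by positivity),
      ← Real.rpow_mul_natCast (by positivity)]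
    push_cast
    ring
  have hsum : Summable fun j : ℕ => 2 / ε ^ 2 * ((j : ℝ) * Real.log 2) ^ (-(α * 2)) := by
    simp_rw [Real.mul_rpow (Nat.cast_nonneg _) hlog2.le]
    exact ((Real.summable_nat_rpow.2 (by linarith)).mul_right _).mul_left _
  have hbound : ∀ᶠ j in atTop, μ.real {ω | ∃ k ≤ 2 ^ (j + 1), L j ≤ |S k ω|} ≤
      2 / ε ^ 2 * ((j : ℝ) * Real.log 2) ^ (-(α * 2)) := by
    filter_upwards [eventually_ge_atTop 1] with j hj
    have hjpos : (0 : ℝ) < j * Real.log 2 := by positivity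
    have hmax := hS.kolmogorov_maximal_ineq_of_abs_sub_le_one hS0 hinc
      (L := L j) (by positivity) (2 ^ (j + 1))
    rw [hLsq, ← le_div_iff₀' (by positivity)] at hmax
    refine hmax.trans_eq ?_
    rw [Real.rpow_neg hjpos.le]
    field_simp
    push_cast
    ring
  filter_upwards [ae_eventually_notMem_of_measureReal_le hsum hbound] with ω hω
  filter_upwards [hω] with j hj k hk using not_le.1 fun h => hj ⟨k, hk, h⟩

theorem ae_tendsto_abs_div_sqrt_mul_log_rpow [IsProbabilityMeasure μ] (hS : Martingale S ℱ μ)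
    (hS0 : S 0 = 0) (hinc : ∀ n, ∀ᵐ ω ∂μ, |S (n + 1) ω - S n ω| ≤ 1) {α : ℝ}
    (hα : 1 / 2 < α) :
    ∀ᵐ ω ∂μ, Tendsto (fun n : ℕ => |S n ω| / (√(n : ℝ) * Real.log n ^ α)) atTop (𝓝 0) := by
  have hblocks : ∀ᵐ ω ∂μ, ∀ M : ℕ, ∀ᶠ j in atTop, ∀ k ≤ 2 ^ (j + 1),
      |S k ω| < 1 / (M + 1) * (√((2 ^ j : ℕ) : ℝ) * Real.log (2 ^ j : ℕ) ^ α) :=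
    ae_all_iff.2 fun M => hS.ae_eventually_forall_le_two_pow_succ_abs_lt hS0 hinc hα (by positivity)
  filter_upwards [hblocks] with ω hω
  refine tendsto_abs_div_of_forall_le_two_pow_succ (monotone_sqrt_mul_log_rpow (by linarith))
    fun ε hε => ?_
  obtain ⟨M, hM⟩ := exists_nat_one_div_lt hε
  filter_upwards [hω M] with j hj k hk
  exact (hj k hk).trans_le (by gcongr)

end MeasureTheory.Martingale

theorem azuma_slln {Ω : Type*} {m : MeasurableSpace Ω} {μ : Measure Ω}
    [IsProbabilityMeasure μ] (ℱ : Filtration ℕ m)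
    (X : ℕ → Ω → ℝ)
    (hmart : Martingale (fun n ω => ∑ i ∈ Finset.Icc 1 n, X i ω) ℱ μ)
    (hbdd : ∀ n, ∀ᵐ ω ∂μ, |X n ω| ≤ 1)
    (α : ℝ) (hα : 1 / 2 < α) :
    ∀ᵐ ω ∂μ, Filter.Tendsto
      (fun n : ℕ => Real.sqrt n * |(∑ i ∈ Finset.Icc 1 n, X i ω) / n| / (Real.log n) ^ α)
      Filter.atTop (nhds 0) := by
  have hinc (n : ℕ) : ∀ᵐ ω ∂μ,
      |∑ i ∈ Finset.Icc 1 (n + 1), X i ω - ∑ i ∈ Finset.Icc 1 n, X i ω| ≤ 1 := by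
    filter_upwards [hbdd (n + 1)] with ω hω
    rwa [Finset.sum_Icc_succ_top (Nat.le_add_left 1 n), add_sub_cancel_left]
  filter_upwards [hmart.ae_tendsto_abs_div_sqrt_mul_log_rpow (funext fun ω => by simp) hinc hα]
    with ω hω
  refine hω.congr fun n => ?_
  rw [abs_div, Nat.abs_cast]
  rcases Nat.eq_zero_or_pos n with rfl | hn
  · simp
  · have hsqrt : √(n : ℝ) ^ 2 = n := Real.sq_sqrt n.cast_nonneg
    field_simp
    rw [hsqrt]
end
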